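/- arXiv:1509.03915 — 4 statements merged into one kernel-verified Lean document; each statement's English description precedes it below -/
import Mathlib

section
/- Let H be a finite set of houses and ≿_i a total preorder on H for an agent i. For all allocations p, q : H → ℝ (nonnegative functions): if p ≿_i^SD q then p ≿_i^DL q, and if p ≻_i^SD q then p ≻_i^DL q. -/
open Finset
open scoped Classical

variable {N H : Type*}

noncomputable section

/-- The total weight that allocation `p` puts on houses weakly preferred to `h`
(with respect to the preference relation `R`, where `R a b` means `a ≿ b`). -/
def upperSum [Fintype H] (R : H → H → Prop) (p : H → ℝ) (h : H) : ℝ :=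
  ∑ h' ∈ Finset.univ.filter (fun h' => R h' h), p h'

/-- `p ≿^SD q` (stochastic dominance). -/
def SDge [Fintype H] (R : H → H → Prop) (p q : H → ℝ) : Prop :=
  ∀ h, upperSum R q h ≤ upperSum R p h

/-- `p ≻^SD q`. -/
def SDgt [Fintype H] (R : H → H → Prop) (p q : H → ℝ) : Prop :=
  SDge R p q ∧ ¬ SDge R q p

/-- Total weight that `p` puts on the indifference class of `h`. -/
def classSum [Fintype H] (R : H → H → Prop) (p : H → ℝ) (h : H) : ℝ :=
  ∑ h' ∈ Finset.univ.filter (fun h' => R h' h ∧ R h h'), p h'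

/-- `p ~^DL q`: all indifference-class sums agree. -/
def DLsim [Fintype H] (R : H → H → Prop) (p q : H → ℝ) : Prop :=
  ∀ h, classSum R p h = classSum R q h

/-- `p ≻^DL q`: there is an indifference class (represented by a house `h`) on which
`p` puts strictly more weight, while all strictly more preferred classes have equal sums. -/
def DLgt [Fintype H] (R : H → H → Prop) (p q : H → ℝ) : Prop :=
  ∃ h, classSum R q h < classSum R p h ∧
    ∀ h', R h' h ∧ ¬ R h h' → classSum R p h' = classSum R q h'

/-- `p ≿^DL q`. -/
def DLge [Fintype H] (R : H → H → Prop) (p q : H → ℝ) : Prop :=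
  DLgt R p q ∨ DLsim R p q

/-- An allocation is a nonnegative function on houses. -/
def IsAlloc (p : H → ℝ) : Prop := ∀ h, 0 ≤ p h

/-- A preference is a total preorder (total and transitive relation). -/
def TotalPreorderRel (R : H → H → Prop) : Prop := Total R ∧ Transitive R

/-- An assignment with respect to endowments `e`. -/
def IsAssignment [Fintype N] (e x : N → H → ℝ) : Prop :=
  (∀ i, IsAlloc (x i)) ∧ ∀ h, ∑ i, x i h = ∑ i, e i h

/-- SD-efficiency. -/
def SDEfficient [Fintype N] [Fintype H] (R : N → H → H → Prop) (e x : N → H → ℝ) : Prop :=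
  ¬ ∃ y, IsAssignment e y ∧ (∀ i, SDge (R i) (y i) (x i)) ∧ ∃ i, SDgt (R i) (y i) (x i)

/-- SD individual rationality. -/
def SDIR [Fintype H] (R : N → H → H → Prop) (e x : N → H → ℝ) : Prop :=
  ∀ i, SDge (R i) (x i) (e i)

/-- SD core stability. -/
def SDCoreStable [Fintype N] [Fintype H] (R : N → H → H → Prop) (e x : N → H → ℝ) : Prop :=
  ¬ ∃ (S : Finset N) (y : N → H → ℝ), S.Nonempty ∧ (∀ i ∈ S, IsAlloc (y i)) ∧
      (∀ h, ∑ i ∈ S, y i h = ∑ i ∈ S, e i h) ∧ ∀ i ∈ S, SDgt (R i) (y i) (x i)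

/-- SD strict core membership. -/
def SDStrictCore [Fintype N] [Fintype H] (R : N → H → H → Prop) (e x : N → H → ℝ) : Prop :=
  ¬ ∃ (S : Finset N) (y : N → H → ℝ), S.Nonempty ∧ (∀ i ∈ S, IsAlloc (y i)) ∧
      (∀ h, ∑ i ∈ S, y i h = ∑ i ∈ S, e i h) ∧
      (∀ i ∈ S, SDge (R i) (y i) (x i)) ∧ ∃ i ∈ S, SDgt (R i) (y i) (x i)

/-- The allocation consisting of exactly one unit of house `h`. -/
def delta [DecidableEq H] (h : H) : H → ℝ := fun h' => if h' = h then 1 else 0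

end

section Aux
variable {H : Type*} [Fintype H]

lemma exists_minR {R : H → H → Prop} (hTot : Total R) (hTrans : Transitive R)
    (s : Finset H) (hs : s.Nonempty) : ∃ m ∈ s, ∀ x ∈ s, R x m := by
  classical
  induction s using Finset.induction_on with
  | empty => exact absurd hs (by simp)
  | @insert a t ha ih =>
    rcases t.eq_empty_or_nonempty with rfl | ht
    · refine ⟨a, by simp, ?_⟩
      intro x hx
      simp only [Finset.mem_insert, Finset.notMem_empty, or_false] at hx
      rw [hx]
      exact (hTot a a).elim id id
    · obtain ⟨m, hm, hmax⟩ := ih ht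
      rcases hTot a m with h1 | h2
      · refine ⟨m, Finset.mem_insert_of_mem hm, ?_⟩
        intro x hx
        rcases Finset.mem_insert.mp hx with rfl | hx
        · exact h1
        · exact hmax x hx
      · refine ⟨a, Finset.mem_insert_self a t, ?_⟩
        intro x hx
        rcases Finset.mem_insert.mp hx with rfl | hx
        · exact (hTot x x).elim id id
        · exact hTrans (hmax x hx) h2

open Finset in
lemma upperSum_split (R : H → H → Prop) (p : H → ℝ) (h : H) :
    upperSum R p h = classSum R p h
      + ∑ x ∈ univ.filter (fun x => R x h ∧ ¬ R h x), p x := by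
  classical
  rw [upperSum, classSum, ← Finset.sum_filter_add_sum_filter_not
    (univ.filter fun x => R x h) (fun x => R h x) p]
  congr 1 <;> · congr 1; rw [Finset.filter_filter]

open Finset in
lemma strictSum_eq {R : H → H → Prop} (hTot : Total R) (hTrans : Transitive R)
    (p q : H → ℝ) :
    ∀ (n : ℕ) (h : H), (univ.filter fun x => R x h ∧ ¬ R h x).card ≤ n →
      (∀ x, R x h ∧ ¬ R h x → classSum R p x = classSum R q x) →
      ∑ x ∈ univ.filter (fun x => R x h ∧ ¬ R h x), p x
        = ∑ x ∈ univ.filter (fun x => R x h ∧ ¬ R h x), q x := by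
  classical
  intro n
  induction n with
  | zero =>
    intro h hcard _
    have : (univ.filter fun x => R x h ∧ ¬ R h x) = ∅ :=
      Finset.card_eq_zero.mp (Nat.le_zero.mp hcard)
    simp [this]
  | succ n ih =>
    intro h hcard hcl
    rcases (univ.filter fun x => R x h ∧ ¬ R h x).eq_empty_or_nonempty with he | hne
    · simp [he]
    · obtain ⟨m, hm, hmin⟩ := exists_minR hTot hTrans _ hne
      simp only [Finset.mem_filter, Finset.mem_univ, true_and] at hm
      have hset : (univ.filter fun x => R x h ∧ ¬ R h x) = univ.filter (fun x => R x m) := by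
        ext x
        simp only [Finset.mem_filter, Finset.mem_univ, true_and]
        constructor
        · intro hx
          exact hmin x (by simp [hx])
        · intro hx
          refine ⟨hTrans hx hm.1, fun hhx => hm.2 (hTrans hhx hx)⟩
      have hsub : ∀ x, R x m ∧ ¬ R m x → R x h ∧ ¬ R h x := by
        intro x hx
        refine ⟨hTrans hx.1 hm.1, fun hhx => hm.2 (hTrans hhx hx.1)⟩
      have hmem : m ∉ (univ.filter fun x => R x m ∧ ¬ R m x) := by
        simp [(hTot m m).elim id id]
      have hmm : m ∈ (univ.filter fun x => R x h ∧ ¬ R h x) := by simp [hm]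
      have hcard' : (univ.filter fun x => R x m ∧ ¬ R m x).card ≤ n := by
        have hss : (univ.filter fun x => R x m ∧ ¬ R m x)
            ⊂ (univ.filter fun x => R x h ∧ ¬ R h x) := by
          refine Finset.ssubset_iff_of_subset ?_ |>.mpr ⟨m, hmm, hmem⟩
          intro x hx
          simp only [Finset.mem_filter, Finset.mem_univ, true_and] at hx ⊢
          exact hsub x hx
        have := Finset.card_lt_card hss
        omega
      have key : ∀ r : H → ℝ, ∑ x ∈ univ.filter (fun x => R x h ∧ ¬ R h x), r x
          = ∑ x ∈ univ.filter (fun x => R x m ∧ R m x), r x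
            + ∑ x ∈ univ.filter (fun x => R x m ∧ ¬ R m x), r x := by
        intro r
        rw [hset, ← Finset.sum_filter_add_sum_filter_not
          (univ.filter fun x => R x m) (fun x => R m x) r]
        congr 1 <;> · congr 1; rw [Finset.filter_filter]
      rw [key p, key q]
      have h1 : classSum R p m = classSum R q m := hcl m hm
      have h2 := ih m hcard' (fun x hx => hcl x (hsub x hx))
      rw [classSum, classSum] at h1
      rw [h1, h2]

open Finset in
lemma upperSum_eq_of_class {R : H → H → Prop} (hTot : Total R) (hTrans : Transitive R)
    (p q : H → ℝ) (h : H)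
    (hcl : ∀ x, R x h ∧ ¬ R h x → classSum R p x = classSum R q x) :
    upperSum R p h - classSum R p h = upperSum R q h - classSum R q h := by
  have h1 := upperSum_split R p h
  have h2 := upperSum_split R q h
  have h3 := strictSum_eq hTot hTrans p q
    (univ.filter fun x => R x h ∧ ¬ R h x).card h le_rfl hcl
  rw [h1, h2, h3]
  ring

end Aux

/-- for nonnegative allocations `p, q` and a total preorder `R`,
SD preference implies DL preference, and strict SD preference implies strict DL preference. -/
theorem sd_implies_dl [Fintype H] (R : H → H → Prop)
    (hTot : Total R) (hTrans : Transitive R)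
    (p q : H → ℝ) (hp : IsAlloc p) (hq : IsAlloc q) :
    (SDge R p q → DLge R p q) ∧ (SDgt R p q → DLgt R p q) := by
  classical
  have main : SDge R p q → DLge R p q := by
    intro hsd
    by_cases hsim : DLsim R p q
    · exact Or.inr hsim
    · left
      have hex : ∃ h, classSum R p h ≠ classSum R q h := by
        by_contra hcon
        push_neg at hcon
        exact hsim fun h => hcon h
      obtain ⟨h0, hh0⟩ := hex
      have hne : (Finset.univ.filter fun h => classSum R p h ≠ classSum R q h).Nonempty :=
        ⟨h0, by simp [hh0]⟩
      obtain ⟨m, hm, hmax⟩ := exists_minR (R := fun a b => R b a)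
        (fun a b => (hTot b a)) (fun _ _ _ hab hbc => hTrans hbc hab) _ hne
      simp only [Finset.mem_filter, Finset.mem_univ, true_and] at hm
      have hcl : ∀ x, R x m ∧ ¬ R m x → classSum R p x = classSum R q x := by
        intro x hx
        by_contra hc
        exact hx.2 (hmax x (by simp [hc]))
      refine ⟨m, ?_, hcl⟩
      have h1 := upperSum_eq_of_class hTot hTrans p q m hcl
      have h2 := hsd m
      rcases lt_or_eq_of_le (by linarith : classSum R q m ≤ classSum R p m) with hlt | heq
      · exact hlt
      · exact absurd heq.symm hm
  refine ⟨main, ?_⟩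
  rintro ⟨hge, hngt⟩
  rcases main hge with hgt | hsim
  · exact hgt
  · exfalso
    apply hngt
    intro h
    have h1 := upperSum_eq_of_class hTot hTrans p q h (fun x _ => hsim x)
    have h2 := hsim h
    linarith
end

section
/- Consider the fractional housing market with agents N = {1,2,3}, houses H = {a,b,c}, endowments e(1) = δ_a, e(2) = δ_c, e(3) = δ_b, and strict preferences: agent 1: c ≻ b ≻ a; agent 2: a ≻ b ≻ c; agent 3: a ≻ b ≻ c. Then there is no assignment x in which each agent receives exactly one whole house (i.e., x(i) = δ_{σ(i)} for some bijection σ : N → H) that is both SD-core stable and satisfies no justified envy. -/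
open Finset
open scoped Classical

variable {N H : Type*}

/-- No justified envy: no agent `i` has justified envy toward another agent `j`. -/
noncomputable def NJE [Fintype N] [Fintype H]
    (R : N → H → H → Prop) (e x : N → H → ℝ) : Prop :=
  ∀ i j : N, i ≠ j → ¬ (SDgt (R i) (x j) (x i) ∧ SDge (R j) (x i) (e j))

/-- Ranks (0 = best): agent 1 has c ≻ b ≻ a; agents 2 and 3 have a ≻ b ≻ c
(houses a, b, c are encoded as 0, 1, 2). -/
def rank8 : Fin 3 → Fin 3 → ℕ := ![![2, 1, 0], ![0, 1, 2], ![0, 1, 2]]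

/-- The preference profile. -/
def R8 (i : Fin 3) (h h' : Fin 3) : Prop := rank8 i h ≤ rank8 i h'

/-- Endowments: e(1) = δ_a, e(2) = δ_c, e(3) = δ_b. -/
noncomputable def e8 : Fin 3 → Fin 3 → ℝ := ![delta 0, delta 2, delta 1]

instance R8dec (i h h' : Fin 3) : Decidable (R8 i h h') := by unfold R8; infer_instance

lemma upperSum_delta (R : Fin 3 → Fin 3 → Prop) (h k : Fin 3) :
    upperSum R (delta h) k = if R h k then 1 else 0 := by
  classical
  rw [upperSum]
  simp [delta, Finset.sum_ite_eq', Finset.mem_filter]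

lemma SDge_delta_iff (i h h' : Fin 3) :
    SDge (R8 i) (delta h) (delta h') ↔ ∀ k, R8 i h' k → R8 i h k := by
  unfold SDge
  simp only [upperSum_delta]
  constructor
  · intro H k hk
    have := H k
    by_contra hc
    simp only [hk, hc, if_true, if_false] at this
    norm_num at this
  · intro H k
    split_ifs with h1 h2
    · norm_num
    · exact absurd (H k h1) h2
    · norm_num
    · norm_num

lemma SDgt_delta_iff : ∀ (i h h' : Fin 3),
    SDgt (R8 i) (delta h) (delta h') ↔ rank8 i h < rank8 i h' := by
  intro i h h'
  unfold SDgt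
  rw [SDge_delta_iff, SDge_delta_iff]
  revert i h h'
  decide

lemma alloc_delta (h : Fin 3) : IsAlloc (delta h) := by
  intro k; unfold delta; split_ifs <;> norm_num

/-- in this market no assignment giving each agent exactly one whole house
is both SD-core stable and satisfies no justified envy. -/
theorem no_discrete_core_stable_nje_assignment :
    ¬ ∃ σ : Fin 3 ≃ Fin 3,
      SDCoreStable R8 e8 (fun i => delta (σ i)) ∧
      NJE R8 e8 (fun i => delta (σ i)) := by
  rintro ⟨σ, hcore, hnje⟩
  have i01 : σ 0 ≠ σ 1 := fun h => absurd (σ.injective h) (by decide)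
  have i02 : σ 0 ≠ σ 2 := fun h => absurd (σ.injective h) (by decide)
  have i12 : σ 1 ≠ σ 2 := fun h => absurd (σ.injective h) (by decide)
  have tri : ∀ x : Fin 3, x = 0 ∨ x = 1 ∨ x = 2 := by decide
  rcases tri (σ 0) with h0 | h0 | h0 <;> rcases tri (σ 1) with h1 | h1 | h1 <;>
    rcases tri (σ 2) with h2 | h2 | h2 <;>
    first
      | exact i01 (h0.trans h1.symm)
      | exact i02 (h0.trans h2.symm)
      | exact i12 (h1.trans h2.symm)
      | skip
  -- (0,1,2): coalition {0,2} swaps a and b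
  · refine hcore ⟨{0, 2}, ![delta 1, delta 0, delta 0], ⟨0, by decide⟩, ?_, ?_, ?_⟩
    · intro i _; fin_cases i <;> exact alloc_delta _
    · intro h
      rw [Finset.sum_pair (by decide : (0 : Fin 3) ≠ 2),
          Finset.sum_pair (by decide : (0 : Fin 3) ≠ 2)]
      show delta 1 h + delta 0 h = delta 0 h + delta 1 h
      exact add_comm _ _
    · intro i hi
      fin_cases hi
      · exact (SDgt_delta_iff 0 1 (σ 0)).mpr (by rw [h0]; decide)
      · exact (SDgt_delta_iff 2 0 (σ 2)).mpr (by rw [h2]; decide)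
  -- (0,2,1): coalition {0,2} swaps a and b
  · refine hcore ⟨{0, 2}, ![delta 1, delta 0, delta 0], ⟨0, by decide⟩, ?_, ?_, ?_⟩
    · intro i _; fin_cases i <;> exact alloc_delta _
    · intro h
      rw [Finset.sum_pair (by decide : (0 : Fin 3) ≠ 2),
          Finset.sum_pair (by decide : (0 : Fin 3) ≠ 2)]
      show delta 1 h + delta 0 h = delta 0 h + delta 1 h
      exact add_comm _ _
    · intro i hi
      fin_cases hi
      · exact (SDgt_delta_iff 0 1 (σ 0)).mpr (by rw [h0]; decide)
      · exact (SDgt_delta_iff 2 0 (σ 2)).mpr (by rw [h2]; decide)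
  -- (1,0,2): agent 2 blocks alone (IR violation)
  · refine hcore ⟨{2}, (fun _ => delta 1), ⟨2, by decide⟩, ?_, ?_, ?_⟩
    · intro i _; exact alloc_delta _
    · intro h; simp [e8]
    · intro i hi
      fin_cases hi
      exact (SDgt_delta_iff 2 1 (σ 2)).mpr (by rw [h2]; decide)
  -- (1,2,0): coalition {0,1} swaps a and c
  · refine hcore ⟨{0, 1}, ![delta 2, delta 0, delta 0], ⟨0, by decide⟩, ?_, ?_, ?_⟩
    · intro i _; fin_cases i <;> exact alloc_delta _
    · intro h
      rw [Finset.sum_pair (by decide : (0 : Fin 3) ≠ 1),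
          Finset.sum_pair (by decide : (0 : Fin 3) ≠ 1)]
      show delta 2 h + delta 0 h = delta 0 h + delta 2 h
      exact add_comm _ _
    · intro i hi
      fin_cases hi
      · exact (SDgt_delta_iff 0 2 (σ 0)).mpr (by rw [h0]; decide)
      · exact (SDgt_delta_iff 1 0 (σ 1)).mpr (by rw [h1]; decide)
  -- (2,0,1): agent 2 justifiably envies agent 1
  · refine hnje 2 1 (by decide) ⟨?_, ?_⟩
    · exact (SDgt_delta_iff 2 (σ 1) (σ 2)).mpr (by rw [h1, h2]; decide)
    · exact (SDge_delta_iff 1 (σ 2) 2).mpr (by rw [h2]; decide)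
  -- (2,1,0): agent 1 justifiably envies agent 2
  · refine hnje 1 2 (by decide) ⟨?_, ?_⟩
    · exact (SDgt_delta_iff 1 (σ 2) (σ 1)).mpr (by rw [h1, h2]; decide)
    · exact (SDge_delta_iff 2 (σ 1) 1).mpr (by rw [h1]; decide)
end

section
/- Consider the fractional housing market with agents N = {1,2,3}, houses H = {a,b,c}, endowments e(1) = δ_a, e(2) = δ_c, e(3) = δ_b, and strict preferences: agent 1: c ≻ b ≻ a; agent 2: a ≻ b ≻ c; agent 3: a ≻ b ≻ c. The assignment x with x(1) = δ_c, x(2) = δ_a, x(3) = δ_b is SD-core stable, and in x agent 3 has justified envy toward agent 2 (so x does not satisfy no justified envy). -/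
open Finset
open scoped Classical

variable {N H : Type*}

/-- The assignment x(1) = δ_c, x(2) = δ_a, x(3) = δ_b. -/
noncomputable def x9 : Fin 3 → Fin 3 → ℝ := ![delta 2, delta 0, delta 1]

-- Auxiliary lemmas -------------------------------------------------------

lemma ge0 {p : Fin 3 → ℝ} (h : SDge (R8 0) p (delta 2)) : 1 ≤ p 2 := by
  have := h 2
  simp [upperSum, Finset.sum_filter, Fin.sum_univ_three, R8, rank8, Matrix.vecHead, Matrix.vecTail, delta] at this
  linarith

lemma ge1 {p : Fin 3 → ℝ} (h : SDge (R8 1) p (delta 0)) : 1 ≤ p 0 := by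
  have := h 0
  simp [upperSum, Finset.sum_filter, Fin.sum_univ_three, R8, rank8, Matrix.vecHead, Matrix.vecTail, delta] at this
  linarith

lemma ge2 {p : Fin 3 → ℝ} (h : SDge (R8 2) p (delta 1)) : 1 ≤ p 0 + p 1 := by
  have := h 1
  simp [upperSum, Finset.sum_filter, Fin.sum_univ_three, R8, rank8, Matrix.vecHead, Matrix.vecTail, delta] at this
  linarith

lemma nostrict0 {p : Fin 3 → ℝ} (e0 : p 0 = 0) (e1 : p 1 = 0) (e2 : p 2 = 1) :
    SDge (R8 0) (delta 2) p := by
  intro h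
  fin_cases h <;>
    simp [upperSum, Finset.sum_filter, Fin.sum_univ_three, R8, rank8, Matrix.vecHead, Matrix.vecTail, delta, e0, e1, e2]

lemma nostrict2 {p : Fin 3 → ℝ} (e0 : p 0 = 0) (e1 : p 1 = 1) (e2 : p 2 = 0) :
    SDge (R8 2) (delta 1) p := by
  intro h
  fin_cases h <;>
    simp [upperSum, Finset.sum_filter, Fin.sum_univ_three, R8, rank8, Matrix.vecHead, Matrix.vecTail, delta, e0, e1, e2]

/-- the assignment `x9` is SD-core stable, and in it agent 3 has justified
envy toward agent 2 (agent 3 strictly SD-prefers x(2) to x(3), and agent 2 weakly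
SD-prefers x(3) to his endowment e(2)). -/
theorem core_stable_but_justified_envy :
    SDCoreStable R8 e8 x9 ∧
    SDgt (R8 2) (x9 1) (x9 2) ∧ SDge (R8 1) (x9 2) (e8 1) := by
  refine ⟨?_, ⟨?_, ?_⟩, ?_⟩
  · rintro ⟨S, y, hne, hpos, hsum, hgt⟩
    by_cases h0 : (0 : Fin 3) ∈ S
    · have g0 : (1:ℝ) ≤ y 0 2 := ge0 (hgt 0 h0).1
      by_cases h1 : (1 : Fin 3) ∈ S
      · have g1 : (1:ℝ) ≤ y 1 0 := ge1 (hgt 1 h1).1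
        by_cases h2 : (2 : Fin 3) ∈ S
        · -- S = {0,1,2}
          have hS : S = {0, 1, 2} := by ext i; fin_cases i <;> simp [h0, h1, h2]
          subst hS
          have g2 : (1:ℝ) ≤ y 2 0 + y 2 1 := ge2 (hgt 2 (by simp)).1
          have s0 := hsum 0; have s1 := hsum 1; have s2 := hsum 2
          simp [Finset.sum_insert, Finset.mem_insert, e8, Matrix.vecHead, Matrix.vecTail, delta] at s0 s1 s2
          have n0 := hpos 0 (by simp); have n1 := hpos 1 (by simp)
          have n2 := hpos 2 (by simp)
          refine (hgt 2 (by simp)).2 (nostrict2 ?_ ?_ ?_)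
          · have := n2 0; have := n0 0; linarith
          · have h20 : y 2 0 = 0 := by have := n2 0; have := n0 0; linarith
            have := n0 1; have := n1 1; have := n2 1; linarith
          · have := n1 2; have := n2 2; linarith
        · -- S = {0,1}
          have hS : S = {0, 1} := by ext i; fin_cases i <;> simp [h0, h1, h2]
          subst hS
          have s0 := hsum 0; have s1 := hsum 1; have s2 := hsum 2
          simp [Finset.sum_insert, Finset.mem_insert, e8, Matrix.vecHead, Matrix.vecTail, delta] at s0 s1 s2
          have n0 := hpos 0 (by simp); have n1 := hpos 1 (by simp)
          refine (hgt 0 (by simp)).2 (nostrict0 ?_ ?_ ?_)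
          · have := n0 0; linarith
          · have := n0 1; have := n1 1; linarith
          · have := n1 2; linarith
      · -- 0 ∈ S, 1 ∉ S : house c has total endowment 0 in S
        by_cases h2 : (2 : Fin 3) ∈ S
        · have hS : S = {0, 2} := by ext i; fin_cases i <;> simp [h0, h1, h2]
          subst hS
          have s2 := hsum 2
          simp [Finset.sum_insert, Finset.mem_insert, e8, Matrix.vecHead, Matrix.vecTail, delta] at s2
          have := hpos 2 (by simp) 2
          linarith
        · have hS : S = {0} := by ext i; fin_cases i <;> simp [h0, h1, h2]
          subst hS
          have s2 := hsum 2
          simp [e8, Matrix.vecHead, Matrix.vecTail, delta] at s2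
          linarith
    · by_cases h1 : (1 : Fin 3) ∈ S
      · -- 1 ∈ S, 0 ∉ S : house a has total endowment 0 in S
        have g1 : (1:ℝ) ≤ y 1 0 := ge1 (hgt 1 h1).1
        by_cases h2 : (2 : Fin 3) ∈ S
        · have hS : S = {1, 2} := by ext i; fin_cases i <;> simp [h0, h1, h2]
          subst hS
          have s0 := hsum 0
          simp [Finset.sum_insert, Finset.mem_insert, e8, Matrix.vecHead, Matrix.vecTail, delta] at s0
          have := hpos 2 (by simp) 0
          linarith
        · have hS : S = {1} := by ext i; fin_cases i <;> simp [h0, h1, h2]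
          subst hS
          have s0 := hsum 0
          simp [e8, Matrix.vecHead, Matrix.vecTail, delta] at s0
          linarith
      · by_cases h2 : (2 : Fin 3) ∈ S
        · -- S = {2}
          have hS : S = {2} := by ext i; fin_cases i <;> simp [h0, h1, h2]
          subst hS
          have s0 := hsum 0; have s1 := hsum 1; have s2 := hsum 2
          simp [e8, Matrix.vecHead, Matrix.vecTail, delta] at s0 s1 s2
          exact (hgt 2 (by simp)).2 (nostrict2 s0 s1 s2)
        · obtain ⟨i, hi⟩ := hne
          fin_cases i <;> contradiction
  · intro h
    fin_cases h <;>
      simp [x9, upperSum, Finset.sum_filter, Fin.sum_univ_three, R8, rank8, Matrix.vecHead, Matrix.vecTail, delta]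
  · intro hcon
    have := hcon 0
    simp [x9, upperSum, Finset.sum_filter, Fin.sum_univ_three, R8, rank8, Matrix.vecHead, Matrix.vecTail, delta] at this
    linarith
  · intro h
    fin_cases h <;>
      simp [x9, e8, upperSum, Finset.sum_filter, Fin.sum_univ_three, R8, rank8, Matrix.vecHead, Matrix.vecTail, delta]
end

section
/- Consider the fractional housing market with agents N = {1,2,3}, houses H = {a,b,c}, endowments e(1) = (0, 99/100, 1/100), e(2) = (99/100, 0, 1/100), e(3) = (1/100, 1/100, 98/100) (coordinates in order a, b, c), and strict preferences: agent 1: a ≻ c ≻ b; agent 2: b ≻ a ≻ c; agent 3: b ≻ a ≻ c. The assignment x with x(1) = (101/200, 0, 97/200), x(2) = (49/100, 1/2, 1/100), x(3) = (1/20, 1/2, 99/200) (the output of the Controlled Consuming algorithm on this market) is not SD-core stable: the coalition S = {1,2} with y(1) = (99/100, 0, 1/100), y(2) = (0, 99/100, 1/100) satisfies y(1) + y(2) = e(1) + e(2), y(1) ≻_1^SD x(1), and y(2) ≻_2^SD x(2). -/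
open Finset
open scoped Classical

variable {N H : Type*}

/-- Endowments (houses a, b, c encoded as 0, 1, 2). -/
noncomputable def e10 : Fin 3 → Fin 3 → ℝ :=
  ![![0, 99/100, 1/100], ![99/100, 0, 1/100], ![1/100, 1/100, 98/100]]

/-- Ranks (0 = best): agent 1 has a ≻ c ≻ b; agents 2 and 3 have b ≻ a ≻ c. -/
def rank10 : Fin 3 → Fin 3 → ℕ := ![![0, 2, 1], ![1, 0, 2], ![1, 0, 2]]

/-- The preference profile. -/
def R10 (i : Fin 3) (h h' : Fin 3) : Prop := rank10 i h ≤ rank10 i h'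

/-- The outcome of the Controlled Consuming algorithm on this market. -/
noncomputable def x10 : Fin 3 → Fin 3 → ℝ :=
  ![![101/200, 0, 97/200], ![49/100, 1/2, 1/100], ![1/20, 1/2, 99/200]]

/-- The deviation of agent 1 in the blocking coalition {1, 2}. -/
noncomputable def y10₁ : Fin 3 → ℝ := ![99/100, 0, 1/100]

/-- The deviation of agent 2 in the blocking coalition {1, 2}. -/
noncomputable def y10₂ : Fin 3 → ℝ := ![0, 99/100, 1/100]

/-!
Agents 1 and 2 each own 99/100 of the other's favourite house, so trading these shares gives
each of them 99/100 of their top house, against 101/200 and 1/2 under `x10`. Checking the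
remaining upper-contour sums shows that both swapped allocations strictly SD-dominate `x10`,
so the pair {1, 2} blocks.
-/

theorem not_sdCoreStable_of_pair_blocks [Fintype N] [Fintype H] {R : N → H → H → Prop}
    {e x : N → H → ℝ} {i j : N} (hij : i ≠ j) {p q : H → ℝ} (hp : IsAlloc p) (hq : IsAlloc q)
    (hsum : ∀ h, p h + q h = e i h + e j h) (hpi : SDgt (R i) p (x i))
    (hqj : SDgt (R j) q (x j)) : ¬ SDCoreStable R e x := by
  intro hstable
  let y : N → H → ℝ := fun k => if k = i then p else q
  have hyi : y i = p := if_pos rfl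
  have hyj : y j = q := if_neg hij.symm
  refine hstable ⟨{i, j}, y, insert_nonempty i {j}, ?_, fun h => ?_, ?_⟩
  · simp only [mem_insert, mem_singleton]
    rintro k (rfl | rfl) <;> simpa [hyi, hyj]
  · simpa [sum_pair hij, hyi, hyj] using hsum h
  · simp only [mem_insert, mem_singleton]
    rintro k (rfl | rfl) <;> simpa [hyi, hyj]

theorem sdge_R10_zero_iff {p q : Fin 3 → ℝ} :
    SDge (R10 0) p q ↔
      q 0 ≤ p 0 ∧ q 0 + q 1 + q 2 ≤ p 0 + p 1 + p 2 ∧ q 0 + q 2 ≤ p 0 + p 2 := by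
  simp [SDge, Fin.forall_fin_succ, upperSum, sum_filter, Fin.sum_univ_three, R10, rank10]

theorem sdge_R10_one_iff {p q : Fin 3 → ℝ} :
    SDge (R10 1) p q ↔
      q 0 + q 1 ≤ p 0 + p 1 ∧ q 1 ≤ p 1 ∧ q 0 + q 1 + q 2 ≤ p 0 + p 1 + p 2 := by
  simp [SDge, Fin.forall_fin_succ, upperSum, sum_filter, Fin.sum_univ_three, R10, rank10]

theorem y10_add_eq_e10_add (h : Fin 3) : y10₁ h + y10₂ h = e10 0 h + e10 1 h := by
  fin_cases h <;> norm_num [y10₁, y10₂, e10]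

theorem sdgt_y10₁_x10 : SDgt (R10 0) y10₁ (x10 0) := by
  rw [SDgt, sdge_R10_zero_iff, sdge_R10_zero_iff]
  norm_num [y10₁, x10, Matrix.cons_val_two, Matrix.tail_cons]

theorem sdgt_y10₂_x10 : SDgt (R10 1) y10₂ (x10 1) := by
  rw [SDgt, sdge_R10_one_iff, sdge_R10_one_iff]
  norm_num [y10₂, x10, Matrix.cons_val_two, Matrix.tail_cons]

theorem isAlloc_y10₁ : IsAlloc y10₁ := by
  intro h; fin_cases h <;> norm_num [y10₁]

theorem isAlloc_y10₂ : IsAlloc y10₂ := by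
  intro h; fin_cases h <;> norm_num [y10₂]

/-- the CC outcome `x10` is not SD-core stable; the coalition {1, 2}
blocks it via `y10₁, y10₂`. -/
theorem cc_not_sd_core_stable :
    (∀ h, y10₁ h + y10₂ h = e10 0 h + e10 1 h) ∧
    SDgt (R10 0) y10₁ (x10 0) ∧ SDgt (R10 1) y10₂ (x10 1) ∧
    ¬ SDCoreStable R10 e10 x10 :=
  ⟨y10_add_eq_e10_add, sdgt_y10₁_x10, sdgt_y10₂_x10,
    not_sdCoreStable_of_pair_blocks (by decide) isAlloc_y10₁ isAlloc_y10₂ y10_add_eq_e10_add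
      sdgt_y10₁_x10 sdgt_y10₂_x10⟩
end
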